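/- With notation as in the context: let x^a y^b z^c and x^{a'} y^{b'} z^{c'} be two monomials of total degree 4 (a + b + c = 4 = a' + b' + c'). Their images under φ_U become equal in the localization of R_U at the class of the element uv if and only if b ≡ b' (mod 2) and c ≡ c' (mod 2) (equivalently, all three pairs of exponents have the same parity). -/
import Mathlib


noncomputable section

open MvPolynomial

/-- The polynomial ring `ℤ[x,y,z]` (also used, with variables renamed, for the three
blowup charts `ℤ[x,u,v]`, `ℤ[y,s,w]`, `ℤ[z,p,q]`). -/
abbrev P3 : Type := MvPolynomial (Fin 3) ℤ

/-- The first generator `x³z − xy²z` of the ideal `I ⊆ ℤ[x,y,z]`. -/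
def g1 : P3 := X 0 ^ 3 * X 2 - X 0 * X 1 ^ 2 * X 2

/-- The second generator `xy³ − xyz²` of the ideal `I ⊆ ℤ[x,y,z]`. -/
def g2 : P3 := X 0 * X 1 ^ 3 - X 0 * X 1 * X 2 ^ 2

/-- The third generator `yz³ − x²yz` of the ideal `I ⊆ ℤ[x,y,z]`. -/
def g3 : P3 := X 1 * X 2 ^ 3 - X 0 ^ 2 * X 1 * X 2

/-- The chart map `φ_U : ℤ[x,y,z] → ℤ[x,u,v]`, `x ↦ x`, `y ↦ x·u`, `z ↦ x·v`
(in the target, `x = X 0`, `u = X 1`, `v = X 2`). -/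
def phiU : P3 →+* P3 := (aeval ![X 0, X 0 * X 1, X 0 * X 2]).toRingHom

/-- The chart map `φ_V : ℤ[x,y,z] → ℤ[y,s,w]`, `x ↦ y·s`, `y ↦ y`, `z ↦ y·w`
(in the target, `y = X 0`, `s = X 1`, `w = X 2`). -/
def phiV : P3 →+* P3 := (aeval ![X 0 * X 1, X 0, X 0 * X 2]).toRingHom

/-- The chart map `φ_W : ℤ[x,y,z] → ℤ[z,p,q]`, `x ↦ z·p`, `y ↦ z·q`, `z ↦ z`
(in the target, `z = X 0`, `p = X 1`, `q = X 2`). -/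
def phiW : P3 →+* P3 := (aeval ![X 0 * X 1, X 0 * X 2, X 0]).toRingHom

/-- The ideal `I_U = (x⁴v(1−u²), x⁴u(u²−v²), x⁴uv(v²−1))` of `ℤ[x,u,v]`, generated by the
`φ_U`-images of the generators of `I`, so that `R_U = ℤ[x,u,v]/I_U`. -/
def IU : Ideal P3 := Ideal.span {phiU g1, phiU g2, phiU g3}

/-- The ideal `I_V = (y⁴sw(s²−1), y⁴s(1−w²), y⁴w(w²−s²))` of `ℤ[y,s,w]`, generated by the
`φ_V`-images of the generators of `I`, so that `R_V = ℤ[y,s,w]/I_V`. -/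
def IV : Ideal P3 := Ideal.span {phiV g1, phiV g2, phiV g3}

/-- The ideal `I_W = (z⁴p(p²−q²), z⁴pq(q²−1), z⁴q(1−p²))` of `ℤ[z,p,q]`, generated by the
`φ_W`-images of the generators of `I`, so that `R_W = ℤ[z,p,q]/I_W`. -/
def IW : Ideal P3 := Ideal.span {phiW g1, phiW g2, phiW g3}

/-- The class of `u·v` in `R_U = ℤ[x,u,v]/I_U`; the localization of `R_U` at this element
is the coordinate ring of the triple overlap `U ∩ V ∩ W`. -/
def uvU : P3 ⧸ IU := Ideal.Quotient.mk IU (X 1 * X 2)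

namespace DegFourAux

lemma e1 : phiU g1 = X 0 ^ 4 * X 2 - X 0 ^ 4 * X 1 ^ 2 * X 2 := by
  simp [phiU, g1]; ring

lemma e3 : phiU g3 = X 0 ^ 4 * X 1 * X 2 ^ 3 - X 0 ^ 4 * X 1 * X 2 := by
  simp [phiU, g3]; ring

lemma phiU_monomial (a b c : ℕ) :
    phiU (X 0 ^ a * X 1 ^ b * X 2 ^ c) = X 0 ^ (a + b + c) * X 1 ^ b * X 2 ^ c := by
  simp [phiU]; ring

/-- The class of `x⁴ u^b v^c` in `R_U`. -/
def Mbc (b c : ℕ) : P3 ⧸ IU := Ideal.Quotient.mk IU (X 0 ^ 4 * X 1 ^ b * X 2 ^ c)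

lemma hg1 : phiU g1 ∈ IU := Ideal.subset_span (by simp)
lemma hg3 : phiU g3 ∈ IU := Ideal.subset_span (by simp)

lemma stepU (b c : ℕ) : uvU * Mbc (b + 2) c = uvU * Mbc b c := by
  rw [uvU, Mbc, Mbc, ← map_mul, ← map_mul, Ideal.Quotient.eq]
  have h : X 1 * X 2 * (X 0 ^ 4 * X 1 ^ (b + 2) * X 2 ^ c)
      - X 1 * X 2 * (X 0 ^ 4 * X 1 ^ b * X 2 ^ c)
      = -(X 1 ^ (b + 1) * X 2 ^ c) * phiU g1 := by
    rw [e1]; ring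
  rw [h]
  exact IU.mul_mem_left _ hg1

lemma stepV (b c : ℕ) : uvU * Mbc b (c + 2) = uvU * Mbc b c := by
  rw [uvU, Mbc, Mbc, ← map_mul, ← map_mul, Ideal.Quotient.eq]
  have h : X 1 * X 2 * (X 0 ^ 4 * X 1 ^ b * X 2 ^ (c + 2))
      - X 1 * X 2 * (X 0 ^ 4 * X 1 ^ b * X 2 ^ c)
      = (X 1 ^ b * X 2 ^ c) * phiU g3 := by
    rw [e3]; ring
  rw [h]
  exact IU.mul_mem_left _ hg3

lemma redU (b c : ℕ) : uvU * Mbc b c = uvU * Mbc (b % 2) c := by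
  induction b using Nat.strong_induction_on with
  | _ b ih =>
    match b with
    | 0 => simp
    | 1 => simp
    | (b + 2) => rw [stepU, ih b (by omega), Nat.add_mod_right]

lemma redV (b c : ℕ) : uvU * Mbc b c = uvU * Mbc b (c % 2) := by
  induction c using Nat.strong_induction_on with
  | _ c ih =>
    match c with
    | 0 => simp
    | 1 => simp
    | (c + 2) => rw [stepV, ih c (by omega), Nat.add_mod_right]

lemma red (b c : ℕ) : uvU * Mbc b c = uvU * Mbc (b % 2) (c % 2) := by
  rw [redU, redV]

/-- Evaluation at `x = 1, u = -1, v = 1`. -/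
def psi1 : P3 →+* ℤ := (aeval ![(1 : ℤ), -1, 1]).toRingHom
/-- Evaluation at `x = 1, u = 1, v = -1`. -/
def psi2 : P3 →+* ℤ := (aeval ![(1 : ℤ), 1, -1]).toRingHom

lemma ker1 : ∀ p ∈ IU, psi1 p = 0 := by
  intro p hp
  have : IU ≤ RingHom.ker psi1 := by
    rw [IU, Ideal.span_le]
    rintro q hq
    simp only [Set.mem_insert_iff, Set.mem_singleton_iff] at hq
    rcases hq with rfl | rfl | rfl <;>
      simp [RingHom.mem_ker, psi1, phiU, g1, g2, g3]
  exact this hp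

lemma ker2 : ∀ p ∈ IU, psi2 p = 0 := by
  intro p hp
  have : IU ≤ RingHom.ker psi2 := by
    rw [IU, Ideal.span_le]
    rintro q hq
    simp only [Set.mem_insert_iff, Set.mem_singleton_iff] at hq
    rcases hq with rfl | rfl | rfl <;>
      simp [RingHom.mem_ker, psi2, phiU, g1, g2, g3]
  exact this hp

def F1 : P3 ⧸ IU →+* ℤ := Ideal.Quotient.lift IU psi1 ker1
def F2 : P3 ⧸ IU →+* ℤ := Ideal.Quotient.lift IU psi2 ker2

lemma F1_uv : F1 uvU = -1 := by simp [F1, uvU, psi1]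
lemma F2_uv : F2 uvU = -1 := by simp [F2, uvU, psi2]

lemma F1_M (b c : ℕ) : F1 (Mbc b c) = (-1) ^ b := by simp [F1, Mbc, psi1]
lemma F2_M (b c : ℕ) : F2 (Mbc b c) = (-1) ^ c := by simp [F2, Mbc, psi2]

lemma parity_of (m n : ℕ) (h : (-1 : ℤ) ^ m = (-1) ^ n) : m % 2 = n % 2 := by
  rw [neg_one_pow_eq_pow_mod_two, neg_one_pow_eq_pow_mod_two (n := n)] at h
  rcases Nat.mod_two_eq_zero_or_one m with hm | hm <;>
    rcases Nat.mod_two_eq_zero_or_one n with hn | hn <;>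
      simp [hm, hn] at h ⊢

end DegFourAux

/-- Two monomials `x^a y^b z^c` and `x^{a'} y^{b'} z^{c'}` of total degree 4 have equal
images under `φ_U` in the localization of `R_U` at the class of `u·v` if and only if
`b ≡ b' (mod 2)` and `c ≡ c' (mod 2)` (equivalently, all three pairs of exponents have the
same parity). -/


theorem degree_four_monomials_agree_on_triple_overlap_iff
    (a b c a' b' c' : ℕ) (habc : a + b + c = 4) (habc' : a' + b' + c' = 4) :
    (algebraMap (P3 ⧸ IU) (Localization.Away uvU)
        (Ideal.Quotient.mk IU (phiU (X 0 ^ a * X 1 ^ b * X 2 ^ c))) =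
      algebraMap (P3 ⧸ IU) (Localization.Away uvU)
        (Ideal.Quotient.mk IU (phiU (X 0 ^ a' * X 1 ^ b' * X 2 ^ c')))) ↔
    (b % 2 = b' % 2 ∧ c % 2 = c' % 2) := by
  open DegFourAux in
  have key : Ideal.Quotient.mk IU (phiU (X 0 ^ a * X 1 ^ b * X 2 ^ c)) = Mbc b c := by
    rw [phiU_monomial, habc]; rfl
  have key' : Ideal.Quotient.mk IU (phiU (X 0 ^ a' * X 1 ^ b' * X 2 ^ c')) = Mbc b' c' := by
    rw [phiU_monomial, habc']; rfl
  rw [key, key']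
  constructor
  · intro H
    obtain ⟨⟨cc, hcc⟩, h⟩ :=
      (IsLocalization.eq_iff_exists (Submonoid.powers uvU) (Localization.Away uvU)).mp H
    obtain ⟨n, rfl⟩ := hcc
    constructor
    · have h1 := congrArg F1 h
      simp only [map_mul, map_pow, F1_uv, F1_M] at h1
      exact parity_of b b' (mul_left_cancel₀ (pow_ne_zero n (by norm_num)) h1)
    · have h2 := congrArg F2 h
      simp only [map_mul, map_pow, F2_uv, F2_M] at h2
      exact parity_of c c' (mul_left_cancel₀ (pow_ne_zero n (by norm_num)) h2)
  · rintro ⟨hb, hc⟩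
    refine (IsLocalization.eq_iff_exists (Submonoid.powers uvU) (Localization.Away uvU)).mpr
      ⟨⟨uvU, Submonoid.mem_powers _⟩, ?_⟩
    show uvU * Mbc b c = uvU * Mbc b' c'
    rw [red b c, red b' c', hb, hc]

end
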